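/- arXiv:2509.26060 — 8 statements merged into one kernel-verified Lean document; each statement's English description precedes it below -/
import Mathlib

section
/- Let F be a field, q ∈ F with q + 1 ≠ 0, and s, t ≥ 1 natural numbers. Then the determinant of the q-distance matrix D of the complete bipartite graph K_{s,t} equals (−1)^{s+t−2} (q+1)^{s+t−2} ((q+1)²(s−1)(t−1) − s·t), where s and t are cast into F. -/
/-!
Write `D = c • 1 + M.submatrix p p` with `c = -(q + 1)`, `M = !![q + 1, 1; 1, q + 1]` and `p` the map
sending a vertex to its part. Since `M.submatrix p p = P * M * Pᵀ` for the `0/1` incidence matrix `P`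
of `p`, and `Pᵀ * P = diagonal ![s, t]`, the Weinstein–Aronszajn identity
`c ^ 2 * det (c • 1 + P * (M * Pᵀ)) = c ^ (s + t) * det (c • 1 + M * Pᵀ * P)` reduces `det D`
to a `2 × 2` determinant.
-/

/-- The `q`-distance matrix of the complete bipartite graph `K_{s,t}`,
indexed by `Fin s ⊕ Fin t`: diagonal entries are `0`, entries between the two
parts are `1` (distance 1), and off-diagonal entries within a part are
`q + 1` (the `q`-integer `[2]`, distance 2). -/
def qDistKst (F : Type*) [Field F] (q : F) (s t : ℕ) :
    Matrix (Fin s ⊕ Fin t) (Fin s ⊕ Fin t) F :=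
  Matrix.of fun u v =>
    if u = v then 0 else if u.isLeft = v.isLeft then q + 1 else 1

open Finset

namespace Matrix

section CommRing

variable {ι κ R : Type*} [DecidableEq κ] [CommRing R]

theorem submatrix_eq_one_submatrix_mul_mul [Fintype κ] (M : Matrix κ κ R) (p : ι → κ) :
    M.submatrix p p =
      (1 : Matrix κ κ R).submatrix p id * M * (1 : Matrix κ κ R).submatrix id p := by
  ext i j
  simp [mul_apply, one_apply]

theorem one_submatrix_id_mul_one_submatrix [Fintype ι] (p : ι → κ) :
    (1 : Matrix κ κ R).submatrix id p * (1 : Matrix κ κ R).submatrix p id =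
      diagonal fun k => (#{i | p i = k} : R) := by
  ext k l
  simp only [mul_apply, submatrix_apply, id_eq, one_apply, diagonal_apply, boole_mul, ← ite_and]
  split_ifs with h
  · subst h
    simp [Finset.sum_boole, eq_comm]
  · exact Finset.sum_eq_zero fun i _ => if_neg fun h' => h (h'.1.trans h'.2)

end CommRing

section Field

variable {ι κ F : Type*} [Fintype ι] [DecidableEq ι] [Fintype κ] [DecidableEq κ] [Field F]
  {c : F}

omit [Fintype ι] in
theorem smul_one_add_eq_smul_one_add_inv_smul (hc : c ≠ 0) (A : Matrix ι ι F) :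
    c • 1 + A = c • (1 + c⁻¹ • A) := by
  rw [smul_add, smul_smul, mul_inv_cancel₀ hc, one_smul]

theorem pow_card_mul_det_smul_one_add_mul_comm (hc : c ≠ 0) (U : Matrix ι κ F)
    (V : Matrix κ ι F) :
    c ^ Fintype.card κ * (c • 1 + U * V).det = c ^ Fintype.card ι * (c • 1 + V * U).det := by
  rw [smul_one_add_eq_smul_one_add_inv_smul hc, smul_one_add_eq_smul_one_add_inv_smul hc,
    det_smul, det_smul, ← smul_mul, det_one_add_mul_comm, Matrix.mul_smul]
  ring

theorem pow_card_mul_det_smul_one_add_submatrix (hc : c ≠ 0) (M : Matrix κ κ F) (p : ι → κ) :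
    c ^ Fintype.card κ * (c • 1 + M.submatrix p p).det =
      c ^ Fintype.card ι * (c • 1 + M * diagonal fun k => (#{i | p i = k} : F)).det := by
  rw [submatrix_eq_one_submatrix_mul_mul, Matrix.mul_assoc,
    pow_card_mul_det_smul_one_add_mul_comm hc, Matrix.mul_assoc,
    one_submatrix_id_mul_one_submatrix]

end Field

end Matrix

open Matrix

def completeBipartitePart (s t : ℕ) : Fin s ⊕ Fin t → Fin 2 :=
  Sum.elim (fun _ => 0) (fun _ => 1)

theorem card_filter_completeBipartitePart (s t : ℕ) (k : Fin 2) :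
    #{u | completeBipartitePart s t u = k} = ![s, t] k := by
  rw [Finset.card_filter, Fintype.sum_sum_type]
  fin_cases k <;> simp [completeBipartitePart]

theorem qDistKst_eq_smul_one_add_submatrix (F : Type*) [Field F] (q : F) (s t : ℕ) :
    qDistKst F q s t = (-(q + 1)) • 1 +
      !![q + 1, 1; 1, q + 1].submatrix (completeBipartitePart s t) (completeBipartitePart s t) := by
  ext (u | u) (v | v) <;> simp [qDistKst, completeBipartitePart, one_apply] <;> split_ifs <;> ring

theorem det_qDist_completeBipartite (F : Type*) [Field F] (q : F)
    (hq : q + 1 ≠ 0) (s t : ℕ) (hs : 1 ≤ s) (ht : 1 ≤ t) :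
    (qDistKst F q s t).det =
      (-1) ^ (s + t - 2) * (q + 1) ^ (s + t - 2) *
        ((q + 1) ^ 2 * ((s : F) - 1) * ((t : F) - 1) - (s : F) * (t : F)) := by
  have hc : -(q + 1) ≠ 0 := neg_ne_zero.mpr hq
  have key := pow_card_mul_det_smul_one_add_submatrix hc !![q + 1, 1; 1, q + 1]
    (completeBipartitePart s t)
  have hdiag : (diagonal fun k => (#{u | completeBipartitePart s t u = k} : F)) =
      !![(s : F), 0; 0, t] := by
    ext i j
    fin_cases i <;> fin_cases j <;> simp [card_filter_completeBipartitePart]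
  have hdet2 : ((-(q + 1)) • 1 + !![q + 1, 1; 1, q + 1] * !![(s : F), 0; 0, t]).det =
      (q + 1) ^ 2 * ((s : F) - 1) * ((t : F) - 1) - s * t := by
    simp [det_fin_two, one_apply]
    ring
  rw [← qDistKst_eq_smul_one_add_submatrix, hdiag, hdet2, Fintype.card_fin, Fintype.card_sum,
    Fintype.card_fin, Fintype.card_fin, ← Nat.sub_add_cancel (by omega : 2 ≤ s + t)] at key
  apply mul_left_cancel₀ (pow_ne_zero 2 hc)
  rw [key, pow_add, neg_pow]
  ring
end

section
/- Let F be a field, q ∈ F, and s, t ≥ 1 natural numbers with q + 1 ≠ 0 and (q+1)²(s−1)(t−1) ≠ s·t in F. Then the q-distance matrix D of K_{s,t} is invertible, and its inverse is given entrywise by D⁻¹(u,v) = c(u,v)/((q+1)((q+1)²(s−1)(t−1) − st)) − (1/(q+1) if u = v else 0), where c(u,v) = (q+1)²(t−1) − t if u, v both lie in the X-part, c(u,v) = −(q+1) if u and v lie in different parts, and c(u,v) = (q+1)²(s−1) − s if u, v both lie in the Y-part. -/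
def cEntryKst (F : Type*) [Field F] (q : F) (s t : ℕ) :
    Fin s ⊕ Fin t → Fin s ⊕ Fin t → F := fun u v =>
  match u, v with
  | Sum.inl _, Sum.inl _ => (q + 1) ^ 2 * ((t : F) - 1) - (t : F)
  | Sum.inr _, Sum.inr _ => (q + 1) ^ 2 * ((s : F) - 1) - (s : F)
  | _, _ => -(q + 1)

/-!
Both `D` and the claimed inverse are of the form `A.submatrix p p + c • 1`, where `p` sends a
vertex to its part and `A` is a `2 × 2` matrix. Products of matrices pulled back along `p` are
pulled back from `A * diagonal (fibre sizes) * B`, so `D * D⁻¹ = 1` reduces to the `2 × 2`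
identity `M * diagonal (s, t) * C = δ • M + (q + 1) • C` between the part matrices of `D` and of
the numerators `c`, where `δ = (q + 1)² (s - 1) (t - 1) - s t`.
-/

open Finset

namespace Matrix

variable {ι κ R : Type*} [Fintype ι] [Fintype κ] [DecidableEq κ]

theorem submatrix_mul_submatrix_fiberwise [CommSemiring R] (p : ι → κ) (A B : Matrix κ κ R) :
    A.submatrix p p * B.submatrix p p =
      (A * diagonal (fun k => (#{x | p x = k} : R)) * B).submatrix p p := by
  ext u v
  rw [submatrix_apply, mul_apply, mul_apply]
  simp only [submatrix_apply, mul_diagonal]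
  rw [← Finset.sum_fiberwise univ p]
  refine Finset.sum_congr rfl fun k _ => ?_
  rw [Finset.sum_congr rfl fun x hx => by rw [(Finset.mem_filter.mp hx).2], sum_const, nsmul_eq_mul]
  ring

variable [DecidableEq ι] {F : Type*} [Field F]

theorem submatrix_sub_smul_one_mul_eq_one (p : ι → κ) (M C : Matrix κ κ F) {a δ : F}
    (ha : a ≠ 0) (hδ : δ ≠ 0)
    (h : M * diagonal (fun k => (#{x | p x = k} : F)) * C = δ • M + a • C) :
    (M.submatrix p p - a • 1) * ((a * δ)⁻¹ • C.submatrix p p - a⁻¹ • 1) = 1 := by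
  have hMC : M.submatrix p p * C.submatrix p p = δ • M.submatrix p p + a • C.submatrix p p := by
    rw [submatrix_mul_submatrix_fiberwise, h]; rfl
  simp only [sub_mul, mul_sub, mul_smul_comm, smul_mul_assoc, hMC, mul_one, one_mul, smul_smul,
    smul_add, smul_sub]
  rw [show (a * δ)⁻¹ * δ = a⁻¹ by field_simp, show (a * δ)⁻¹ * a = δ⁻¹ by field_simp,
    inv_mul_cancel₀ ha, one_smul]
  abel

end Matrix

section CompleteBipartite

variable (F : Type*) [Field F] (q : F) (s t : ℕ)

-- Parts are indexed by `Sum.isLeft`: `true` is `X = Fin s`, `false` is `Y = Fin t`.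
def qDistPartKst : Matrix Bool Bool F :=
  Matrix.of fun a b => if a = b then q + 1 else 1

def cPartKst : Matrix Bool Bool F :=
  Matrix.of fun a b =>
    match a, b with
    | true, true => (q + 1) ^ 2 * ((t : F) - 1) - (t : F)
    | false, false => (q + 1) ^ 2 * ((s : F) - 1) - (s : F)
    | _, _ => -(q + 1)

theorem qDistKst_eq_submatrix_sub :
    qDistKst F q s t = (qDistPartKst F q).submatrix Sum.isLeft Sum.isLeft - (q + 1) • 1 := by
  ext u v
  by_cases huv : u = v <;> simp [qDistKst, qDistPartKst, huv]

theorem cEntryKst_eq_cPartKst (u v : Fin s ⊕ Fin t) :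
    cEntryKst F q s t u v = cPartKst F q s t u.isLeft v.isLeft := by
  cases u <;> cases v <;> rfl

theorem card_filter_isLeft_eq (b : Bool) : #{x : Fin s ⊕ Fin t | x.isLeft = b} = cond b s t := by
  rw [card_filter, Fintype.sum_sum_type]
  cases b <;> simp

theorem qDistPartKst_mul_mul_cPartKst :
    qDistPartKst F q * Matrix.diagonal (fun b => (#{x : Fin s ⊕ Fin t | x.isLeft = b} : F)) *
        cPartKst F q s t =
      ((q + 1) ^ 2 * ((s : F) - 1) * ((t : F) - 1) - s * t) • qDistPartKst F q +
        (q + 1) • cPartKst F q s t := by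
  ext a b
  cases a <;> cases b <;>
    simp only [Matrix.mul_apply, Matrix.diagonal_apply, Fintype.sum_bool, Matrix.add_apply,
      Matrix.smul_apply, smul_eq_mul, card_filter_isLeft_eq, qDistPartKst, cPartKst, Matrix.of_apply,
      cond_true, cond_false, Bool.true_eq_false, Bool.false_eq_true, if_true, if_false] <;> ring

end CompleteBipartite

theorem inv_qDist_completeBipartite_general (F : Type*) [Field F] (q : F)
    (s t : ℕ) (hq : q + 1 ≠ 0)
    (hst : (q + 1) ^ 2 * ((s : F) - 1) * ((t : F) - 1) ≠ (s : F) * (t : F)) :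
    IsUnit (qDistKst F q s t).det ∧
      ∀ u v, (qDistKst F q s t)⁻¹ u v =
        cEntryKst F q s t u v /
          ((q + 1) * ((q + 1) ^ 2 * ((s : F) - 1) * ((t : F) - 1) - (s : F) * (t : F)))
          - (if u = v then 1 / (q + 1) else 0) := by
  have hinv := Matrix.submatrix_sub_smul_one_mul_eq_one Sum.isLeft _ _ hq (sub_ne_zero.mpr hst)
    (qDistPartKst_mul_mul_cPartKst F q s t)
  rw [← qDistKst_eq_submatrix_sub] at hinv
  refine ⟨Matrix.isUnit_det_of_right_inverse hinv, fun u v => ?_⟩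
  rw [Matrix.inv_eq_right_inv hinv, cEntryKst_eq_cPartKst]
  simp [Matrix.one_apply, div_eq_inv_mul]

theorem inv_qDist_completeBipartite (F : Type*) [Field F] (q : F)
    (s t : ℕ) (hs : 1 ≤ s) (ht : 1 ≤ t) (hq : q + 1 ≠ 0)
    (hst : (q + 1) ^ 2 * ((s : F) - 1) * ((t : F) - 1) ≠ (s : F) * (t : F)) :
    IsUnit (qDistKst F q s t).det ∧
      ∀ u v, (qDistKst F q s t)⁻¹ u v =
        cEntryKst F q s t u v /
          ((q + 1) * ((q + 1) ^ 2 * ((s : F) - 1) * ((t : F) - 1) - (s : F) * (t : F)))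
          - (if u = v then 1 / (q + 1) else 0) :=
  inv_qDist_completeBipartite_general F q s t hq hst
end

section
/- Let F be a field, q ∈ F, and s, t ≥ 1 natural numbers with q + 1 ≠ 0 and q²(s−1)(t−1) − 1 ≠ 0 in F. Let w be any vertex in the Y-part of K_{s,t}. Then ∑_{u} (1 + q + (q² − 1)·D(u,w))·x(u) = q + 1, where the sum runs over all vertices u of K_{s,t}, D is the q-distance matrix of K_{s,t}, and x is the vector defined in the context. -/
/-- The special vector `x` of `K_{s,t}`. -/
def xVecKst (F : Type*) [Field F] (q : F) (s t : ℕ) :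
    Fin s ⊕ Fin t → F :=
  Sum.elim
    (fun _ => (q * ((t : F) - 1) - 1) /
      ((q + 1) * (q ^ 2 * ((s : F) - 1) * ((t : F) - 1) - 1)))
    (fun _ => (q * ((s : F) - 1) - 1) /
      ((q + 1) * (q ^ 2 * ((s : F) - 1) * ((t : F) - 1) - 1)))

/-! Every weight `1 + q + (q² - 1) D(u, w)` is a multiple of `q + 1`, and after clearing the
common denominator `(q + 1) Δ` of `x`, where `Δ = q² (s - 1) (t - 1) - 1`, the numerator
collapses to `(q + 1)² Δ`. -/

open Finset

section qDistKst

variable {F : Type*} [Field F] (q : F) {s t : ℕ}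

@[simp]
theorem qDistKst_inl_inr (i : Fin s) (j : Fin t) : qDistKst F q s t (.inl i) (.inr j) = 1 := by
  simp [qDistKst]

@[simp]
theorem qDistKst_inr_inr (i j : Fin t) :
    qDistKst F q s t (.inr i) (.inr j) = if i = j then 0 else q + 1 := by
  simp [qDistKst]

end qDistKst

theorem Fintype.sum_ite_eq_const {ι M : Type*} [Fintype ι] [DecidableEq ι] [AddCommGroup M]
    (w : ι) (a b : M) : ∑ j, (if j = w then a else b) = Fintype.card ι • b + (a - b) := by
  have hsplit : ∀ j, (if j = w then a else b) = b + if j = w then a - b else 0 := by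
    intro j
    split_ifs <;> abel
  simp only [hsplit, sum_add_distrib, sum_const, card_univ, sum_ite_eq']

theorem mul_mul_div_mul_cancel {G₀ : Type*} [CommGroupWithZero G₀] (a : G₀) {b : G₀}
    (hb : b ≠ 0) : a * (a * b) / (a * b) = a := by
  rw [← mul_assoc, mul_div_mul_comm, mul_self_div_self, div_self hb, mul_one]

theorem sum_qdist_x_eq_q_add_one_general (F : Type*) [Field F] (q : F)
    (s t : ℕ)
    (hΔ : q ^ 2 * ((s : F) - 1) * ((t : F) - 1) - 1 ≠ 0) (w : Fin t) :
    ∑ u, (1 + q + (q ^ 2 - 1) * qDistKst F q s t u (Sum.inr w)) * xVecKst F q s t u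
      = q + 1 := by
  have hY : ∑ j : Fin t, (1 + q + (q ^ 2 - 1) * qDistKst F q s t (.inr j) (.inr w))
      = t * ((q + 1) * q ^ 2) - (q + 1) * (q ^ 2 - 1) := by
    simp only [qDistKst_inr_inr, mul_ite, add_ite, Fintype.sum_ite_eq_const, Fintype.card_fin,
      nsmul_eq_mul]
    ring
  rw [Fintype.sum_sum_type]
  simp only [qDistKst_inl_inr, xVecKst, Sum.elim_inl, Sum.elim_inr, ← Finset.sum_mul, hY,
    sum_const, card_univ, Fintype.card_fin, nsmul_eq_mul]
  rw [mul_div_assoc', mul_div_assoc', ← add_div]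
  convert mul_mul_div_mul_cancel (q + 1) hΔ using 2
  ring

theorem sum_qdist_x_eq_q_add_one (F : Type*) [Field F] (q : F)
    (s t : ℕ) (hs : 1 ≤ s) (ht : 1 ≤ t) (hq : q + 1 ≠ 0)
    (hΔ : q ^ 2 * ((s : F) - 1) * ((t : F) - 1) - 1 ≠ 0) (w : Fin t) :
    ∑ u, (1 + q + (q ^ 2 - 1) * qDistKst F q s t u (Sum.inr w)) * xVecKst F q s t u
      = q + 1 :=
  sum_qdist_x_eq_q_add_one_general F q s t hΔ w
end

section
/- Let F be a field, q ∈ F with q ≠ 0, q + 1 ≠ 0 and q²(s−1)(t−1) − 1 ≠ 0 in F, and s, t ≥ 1 natural numbers. Then the q-distance matrix D of K_{s,t} satisfies D·x = λ·𝟙, i.e. for every vertex u, ∑_{v} D(u,v)·x(v) = λ, where x is the vector and λ the scalar defined in the context. -/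
/-- The scalar `λ` of `K_{s,t}`. -/
def lamKst (F : Type*) [Field F] (q : F) (s t : ℕ) : F :=
  ((q + 1) ^ 2 * ((s : F) - 1) * ((t : F) - 1) - (s : F) * (t : F)) /
    ((q + 1) * (q ^ 2 * ((s : F) - 1) * ((t : F) - 1) - 1))


/-! Since `x` is constant on each part, every row of `D x` collapses to two terms,
`(q + 1)(s - 1) x_X + t x_Y` or `s x_X + (q + 1)(t - 1) x_Y`, and both equal `λ` by a
rational-function identity in `q`, `s`, `t`. -/

theorem Fintype.sum_ite_eq_zero_else {ι R : Type*} [Fintype ι] [DecidableEq ι] [Ring R]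
    (i : ι) (c : R) :
    ∑ j, (if i = j then (0 : R) else c) = ((Fintype.card ι : R) - 1) * c := by
  rw [Finset.sum_ite, Finset.sum_const_zero, zero_add, Finset.sum_const, nsmul_eq_mul,
    Finset.filter_ne, Finset.card_erase_of_mem (Finset.mem_univ i), Finset.card_univ,
    Nat.cast_pred (Fintype.card_pos_iff.mpr ⟨i⟩)]

section RowSums

variable {F : Type*} [Field F] (q : F) {s t : ℕ} (a b : F)

theorem sum_qDistKst_inl_mul_elim_const (i : Fin s) :
    ∑ v, qDistKst F q s t (.inl i) v * Sum.elim (fun _ => a) (fun _ => b) v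
      = (q + 1) * ((s : F) - 1) * a + t * b := by
  simp only [qDistKst, Matrix.of_apply, Fintype.sum_sum_type, Sum.elim_inl, Sum.elim_inr,
    Sum.isLeft_inl, Sum.isLeft_inr, Sum.inl.injEq, reduceCtorEq, if_false, if_true,
    ← Finset.sum_mul, Fintype.sum_ite_eq_zero_else, Fintype.card_fin, Finset.sum_const,
    Finset.card_univ, nsmul_eq_mul, one_mul]
  ring

theorem sum_qDistKst_inr_mul_elim_const (j : Fin t) :
    ∑ v, qDistKst F q s t (.inr j) v * Sum.elim (fun _ => a) (fun _ => b) v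
      = s * a + (q + 1) * ((t : F) - 1) * b := by
  simp only [qDistKst, Matrix.of_apply, Fintype.sum_sum_type, Sum.elim_inl, Sum.elim_inr,
    Sum.isLeft_inl, Sum.isLeft_inr, Sum.inr.injEq, reduceCtorEq, if_false, if_true,
    ← Finset.sum_mul, Fintype.sum_ite_eq_zero_else, Fintype.card_fin, Finset.sum_const,
    Finset.card_univ, nsmul_eq_mul, one_mul]
  ring

end RowSums

theorem qDist_mulVec_x_eq_lambda_general (F : Type*) [Field F] (q : F)
    (s t : ℕ) (hq : q + 1 ≠ 0)
    (hΔ : q ^ 2 * ((s : F) - 1) * ((t : F) - 1) - 1 ≠ 0) :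
    ∀ u, ∑ v, qDistKst F q s t u v * xVecKst F q s t v = lamKst F q s t := by
  rintro (i | j)
  · rw [xVecKst, sum_qDistKst_inl_mul_elim_const, lamKst]
    field_simp
    ring
  · rw [xVecKst, sum_qDistKst_inr_mul_elim_const, lamKst]
    field_simp
    ring

theorem qDist_mulVec_x_eq_lambda (F : Type*) [Field F] (q : F)
    (s t : ℕ) (hs : 1 ≤ s) (ht : 1 ≤ t) (hq0 : q ≠ 0) (hq : q + 1 ≠ 0)
    (hΔ : q ^ 2 * ((s : F) - 1) * ((t : F) - 1) - 1 ≠ 0) :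
    ∀ u, ∑ v, qDistKst F q s t u v * xVecKst F q s t v = lamKst F q s t :=
  qDist_mulVec_x_eq_lambda_general F q s t hq hΔ
end

section
/- Let F be a field, n ≥ 1, q ∈ F, λ ∈ F with λ ≠ 0. Let D be a symmetric invertible n×n matrix over F, L an n×n matrix, and x ∈ Fⁿ a vector such that D·L + I = 𝟙·xᵀ, D·x = λ·𝟙, and ∑_{i} x(i) = 1 − (q − 1)·λ. Then every column sum of L satisfies ∑_{u} L(u,v) = (1 − q)·x(v) for all v; equivalently, 𝟙ᵀ·L = (1 − q)·xᵀ, so that J·L = (1 − q)·𝟙·xᵀ for the all-ones matrix J. -/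
open Matrix in
theorem colSum_of_DL_eq (F : Type*) [Field F] (n : ℕ) (hn : 1 ≤ n)
    (q lam : F) (hlam : lam ≠ 0)
    (D L : Matrix (Fin n) (Fin n) F) (x : Fin n → F)
    (hsymm : D.IsSymm) (hinv : IsUnit D.det)
    (hDL : D * L + 1 = Matrix.of fun _ v => x v)
    (hDx : D.mulVec x = fun _ => lam)
    (hxsum : ∑ i, x i = 1 - (q - 1) * lam) :
    ∀ v, ∑ u, L u v = (1 - q) * x v := by
  have hxD : x ᵥ* D = fun _ => lam := by
    rw [← Matrix.mulVec_transpose, hsymm.eq, hDx]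
  have hDL' : D * L = Matrix.of (fun _ v => x v) - 1 := by
    rw [← hDL, add_sub_cancel_right]
  intro v
  have key : lam * ∑ u, L u v = (1 - q) * lam * x v := by
    have h1 : lam * ∑ u, L u v = ∑ u, (x ᵥ* D) u * L u v := by
      rw [hxD, Finset.mul_sum]
    have h2 : ∑ u, (x ᵥ* D) u * L u v = (x ᵥ* (D * L)) v := by
      rw [← Matrix.vecMul_vecMul]; rfl
    rw [h1, h2, hDL']
    simp only [Matrix.vecMul, dotProduct, Matrix.sub_apply, Matrix.of_apply,
      Matrix.one_apply, mul_sub, mul_ite, mul_one, mul_zero]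
    rw [Finset.sum_sub_distrib, ← Finset.sum_mul, hxsum]
    simp
    ring
  have := mul_left_cancel₀ hlam (key.trans (by ring : (1 - q) * lam * x v = lam * ((1 - q) * x v)))
  exact this
end

section
/- Let F be a field, q ∈ F, and m, s, t ≥ 1 natural numbers, with q + 1 ≠ 0 and Δ := q²(s−1)(t−1) − 1 ≠ 0 in F. Let x̂, d̂ : Fin m → F with d̂(w_m) = 0 (where w_m is the last index of Fin m) and suppose ∑_{i} (1 + q + (q² − 1)·d̂(i))·x̂(i) = q + 1. Index the extended set by I = Fin m ⊕ (Fin (s−1) ⊕ Fin t), fix w₀ : Fin t, and define x : I → F by x(inl i) = x̂(i) for i ≠ w_m, x(inl w_m) = x̂(w_m) + (q(t−1)−1)/((q+1)Δ) − 1, x(inr (inl a)) = (q(t−1)−1)/((q+1)Δ), and x(inr (inr c)) = (q(s−1)−1)/((q+1)Δ); and define d : I → F by d(inl i) = 1 + q·d̂(i), d(inr (inl a)) = 1, d(inr (inr c)) = q + 1 for c ≠ w₀, and d(inr (inr w₀)) = 0. Then ∑_{v ∈ I} (1 + q + (q² − 1)·d(v))·x(v) = q + 1. -/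
/-- The extension of the special vector `x̂` of a graph `H` (with `m` vertices,
cut vertex `w_m`) to the graph obtained by attaching a leaf block `K_{s,t}`
at `w_m` (a vertex of the `X`-part): the new index set is
`Fin m ⊕ (Fin (s-1) ⊕ Fin t)`, where `Fin (s-1)` indexes the new `X`-vertices
and `Fin t` the new `Y`-vertices.  The scalars `s, t` are cast into `F`. -/
def extXVec (F : Type*) [Field F] (q : F) (s t : ℕ) {m s' t' : ℕ}
    (xh : Fin m → F) (wm : Fin m) : Fin m ⊕ (Fin s' ⊕ Fin t') → F := fun u =>
  match u with
  | Sum.inl i =>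
      if i = wm then
        xh wm + (q * ((t : F) - 1) - 1) /
          ((q + 1) * (q ^ 2 * ((s : F) - 1) * ((t : F) - 1) - 1)) - 1
      else xh i
  | Sum.inr (Sum.inl _) =>
      (q * ((t : F) - 1) - 1) /
        ((q + 1) * (q ^ 2 * ((s : F) - 1) * ((t : F) - 1) - 1))
  | Sum.inr (Sum.inr _) =>
      (q * ((s : F) - 1) - 1) /
        ((q + 1) * (q ^ 2 * ((s : F) - 1) * ((t : F) - 1) - 1))

/-- The column of the `q`-distance matrix of the enlarged graph at the new
`Y`-vertex `w₀`, expressed in terms of the column `d̂` of the `q`-distance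
matrix of `H` at the cut vertex `w_m`. -/
def extDCol (F : Type*) [Field F] (q : F) {m s' t : ℕ}
    (dh : Fin m → F) (w0 : Fin t) : Fin m ⊕ (Fin s' ⊕ Fin t) → F := fun u =>
  match u with
  | Sum.inl i => 1 + q * dh i
  | Sum.inr (Sum.inl _) => 1
  | Sum.inr (Sum.inr c) => if c = w0 then 0 else q + 1

/-!
On the old vertices the new column is `1 + q d̂`, whose weight `1 + q + (q² - 1)(1 + q d̂)` is
`q` times the old weight, so by hypothesis the old vertices contribute `q(q + 1)` plus the
correction at `w_m`. Every new vertex has weight `q(q + 1)` (new `X`-vertices), `q²(q + 1)`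
(new `Y`-vertices other than `w₀`) or `q + 1` (`w₀`), and after clearing the denominator
`(q + 1)Δ` the total reduces to the polynomial identity
`(q + 1)Δ = q s (q(t - 1) - 1) + ((t - 1)q² + 1)(q(s - 1) - 1)`.
-/

open Finset

section LeafBlock

variable {F : Type*} [Field F] (q : F)

def qWeight (d : F) : F := 1 + q + (q ^ 2 - 1) * d

theorem qWeight_one_add_mul (d : F) : qWeight q (1 + q * d) = q * qWeight q d := by
  unfold qWeight
  ring

theorem qWeight_zero : qWeight q 0 = q + 1 := by
  unfold qWeight
  ring

theorem qWeight_one : qWeight q 1 = q * (q + 1) := by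
  unfold qWeight
  ring

theorem qWeight_q_add_one : qWeight q (q + 1) = q ^ 2 * (q + 1) := by
  unfold qWeight
  ring

def leafDenom (s t : F) : F := (q + 1) * (q ^ 2 * (s - 1) * (t - 1) - 1)

theorem leafDenom_eq (s t : F) :
    leafDenom q s t = q * s * (q * (t - 1) - 1) + ((t - 1) * q ^ 2 + 1) * (q * (s - 1) - 1) := by
  unfold leafDenom
  ring

def leafXCoeff (s t : F) : F := (q * (t - 1) - 1) / leafDenom q s t

def leafYCoeff (s t : F) : F := (q * (s - 1) - 1) / leafDenom q s t

variable (s t : ℕ) {m s' t' : ℕ} (xh dh : Fin m → F) (wm : Fin m) (w0 : Fin t')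

@[simp]
theorem extDCol_inl (i : Fin m) :
    extDCol F q dh w0 (.inl i : Fin m ⊕ (Fin s' ⊕ Fin t')) = 1 + q * dh i := rfl

@[simp]
theorem extDCol_inr_inl (a : Fin s') :
    extDCol F q dh w0 (.inr (.inl a) : Fin m ⊕ (Fin s' ⊕ Fin t')) = 1 := rfl

@[simp]
theorem extDCol_inr_inr (c : Fin t') :
    extDCol F q dh w0 (.inr (.inr c) : Fin m ⊕ (Fin s' ⊕ Fin t')) =
      if c = w0 then 0 else q + 1 := rfl

@[simp]
theorem extXVec_inl (i : Fin m) :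
    extXVec F q s t xh wm (.inl i : Fin m ⊕ (Fin s' ⊕ Fin t')) =
      xh i + if i = wm then leafXCoeff q s t - 1 else 0 := by
  by_cases hi : i = wm
  · subst hi
    simp only [extXVec, if_true, leafXCoeff, leafDenom]
    ring
  · simp only [extXVec, if_neg hi, add_zero]

@[simp]
theorem extXVec_inr_inl (a : Fin s') :
    extXVec F q s t xh wm (.inr (.inl a) : Fin m ⊕ (Fin s' ⊕ Fin t')) = leafXCoeff q s t := rfl

@[simp]
theorem extXVec_inr_inr (c : Fin t') :
    extXVec F q s t xh wm (.inr (.inr c) : Fin m ⊕ (Fin s' ⊕ Fin t')) = leafYCoeff q s t := rfl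

theorem sum_qWeight_extDCol_mul_extXVec_inl (hdh : dh wm = 0) :
    ∑ i : Fin m, qWeight q (extDCol F q dh w0 (.inl i : Fin m ⊕ (Fin s' ⊕ Fin t'))) *
        extXVec F q s t xh wm (.inl i : Fin m ⊕ (Fin s' ⊕ Fin t'))
      = q * ∑ i, qWeight q (dh i) * xh i + q * (q + 1) * (leafXCoeff q s t - 1) := by
  simp only [extDCol_inl, extXVec_inl, qWeight_one_add_mul, mul_add, mul_ite, mul_zero,
    sum_add_distrib, sum_ite_eq', mem_univ, if_true, hdh, qWeight_zero, mul_assoc, ← mul_sum]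
  ring

theorem sum_qWeight_extDCol_mul_extXVec_inr_inl :
    ∑ a : Fin s', qWeight q (extDCol F q dh w0 (.inr (.inl a) : Fin m ⊕ (Fin s' ⊕ Fin t'))) *
        extXVec F q s t xh wm (.inr (.inl a) : Fin m ⊕ (Fin s' ⊕ Fin t'))
      = s' * (q * (q + 1) * leafXCoeff q s t) := by
  simp only [extDCol_inr_inl, extXVec_inr_inl, qWeight_one, sum_const, card_univ,
    Fintype.card_fin, nsmul_eq_mul]

theorem sum_qWeight_extDCol_mul_extXVec_inr_inr :
    ∑ c : Fin t', qWeight q (extDCol F q dh w0 (.inr (.inr c) : Fin m ⊕ (Fin s' ⊕ Fin t'))) *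
        extXVec F q s t xh wm (.inr (.inr c) : Fin m ⊕ (Fin s' ⊕ Fin t'))
      = (((t' : F) - 1) * q ^ 2 + 1) * (q + 1) * leafYCoeff q s t := by
  have weight (c : Fin t') :
      qWeight q (extDCol F q dh w0 (.inr (.inr c) : Fin m ⊕ (Fin s' ⊕ Fin t')))
        = q ^ 2 * (q + 1) - if c = w0 then (q ^ 2 - 1) * (q + 1) else 0 := by
    by_cases hc : c = w0
    · simp only [extDCol_inr_inr, if_pos hc, qWeight_zero]
      ring
    · simp only [extDCol_inr_inr, if_neg hc, qWeight_q_add_one, sub_zero]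
  simp only [weight, extXVec_inr_inr, ← sum_mul, sum_sub_distrib, sum_ite_eq', mem_univ, if_true,
    sum_const, card_univ, Fintype.card_fin, nsmul_eq_mul]
  ring

end LeafBlock

theorem sum_ext_eq_q_add_one_general (F : Type*) [Field F] (q : F)
    (m s t : ℕ) (hs : 1 ≤ s)
    (hq : q + 1 ≠ 0)
    (hΔ : q ^ 2 * ((s : F) - 1) * ((t : F) - 1) - 1 ≠ 0)
    (xh dh : Fin m → F) (wm : Fin m)
    (hdh : dh wm = 0)
    (hsum : ∑ i, (1 + q + (q ^ 2 - 1) * dh i) * xh i = q + 1)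
    (w0 : Fin t) :
    ∑ v : Fin m ⊕ (Fin (s - 1) ⊕ Fin t),
        (1 + q + (q ^ 2 - 1) * extDCol F q dh w0 v) * extXVec F q s t xh wm v
      = q + 1 := by
  change ∑ v, qWeight q (extDCol F q dh w0 v) * extXVec F q s t xh wm v = q + 1
  change ∑ i, qWeight q (dh i) * xh i = q + 1 at hsum
  have hD : leafDenom q s t ≠ 0 := mul_ne_zero hq hΔ
  rw [Fintype.sum_sum_type, Fintype.sum_sum_type,
    sum_qWeight_extDCol_mul_extXVec_inl q s t xh dh wm w0 hdh, hsum,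
    sum_qWeight_extDCol_mul_extXVec_inr_inl, sum_qWeight_extDCol_mul_extXVec_inr_inr,
    Nat.cast_sub hs, Nat.cast_one, leafXCoeff, leafYCoeff]
  field_simp
  linear_combination (leafDenom_eq q (s : F) t).symm

theorem sum_ext_eq_q_add_one (F : Type*) [Field F] (q : F)
    (m s t : ℕ) (hm : 1 ≤ m) (hs : 1 ≤ s) (ht : 1 ≤ t)
    (hq : q + 1 ≠ 0)
    (hΔ : q ^ 2 * ((s : F) - 1) * ((t : F) - 1) - 1 ≠ 0)
    (xh dh : Fin m → F) (wm : Fin m) (hwm : (wm : ℕ) = m - 1)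
    (hdh : dh wm = 0)
    (hsum : ∑ i, (1 + q + (q ^ 2 - 1) * dh i) * xh i = q + 1)
    (w0 : Fin t) :
    ∑ v : Fin m ⊕ (Fin (s - 1) ⊕ Fin t),
        (1 + q + (q ^ 2 - 1) * extDCol F q dh w0 v) * extXVec F q s t xh wm v
      = q + 1 :=
  sum_ext_eq_q_add_one_general F q m s t hs hq hΔ xh dh wm hdh hsum w0
end

section
/- Let F be a field, q ∈ F, and m, s, t ≥ 1 natural numbers, with q ≠ 0, q + 1 ≠ 0 and Δ := q²(s−1)(t−1) − 1 ≠ 0 in F. Let D̂ be a symmetric m×m matrix over F with D̂(w_m, w_m) = 0 (w_m the last index of Fin m), let x̂ : Fin m → F and λ_H ∈ F satisfy: (i) D̂·x̂ = λ_H·𝟙 (every entry of D̂·x̂ equals λ_H); (ii) ∑_{j} (1 + q + (q² − 1)·D̂(w_m, j))·x̂(j) = q + 1; (iii) ∑_{j} (1 + (q − 1)·D̂(w_m, j))·x̂(j) = 1. Index I = Fin m ⊕ (Fin (s−1) ⊕ Fin t), fix w₀ : Fin t, and define the I×I matrix D by: D(inl i, inl j) = D̂(i,j); D(inl i, inr(inl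 b)) = D(inr(inl b), inl i) = (q+1) + q²·D̂(i, w_m); D(inl i, inr(inr c)) = D(inr(inr c), inl i) = 1 + q·D̂(i, w_m); D(inr(inl a), inr(inl b)) = q+1 if a ≠ b and 0 if a = b; D(inr(inl a), inr(inr c)) = D(inr(inr c), inr(inl a)) = 1; D(inr(inr c), inr(inr c')) = q+1 if c ≠ c' and 0 if c = c'. Define x : I → F by x(inl i) = x̂(i) for i ≠ w_m, x(inl w_m) = x̂(w_m) + (q(t−1)−1)/((q+1)Δ) − 1, x(inr (inl a)) = (q(t−1)−1)/((q+1)Δ), x(inr (inr c)) = (q(s−1)−1)/((q+1)Δ). Then D·x = (λ_H + λ_{s,t})·𝟙, where λ_{s,t} = ((q+1)²(s−1)(t−1) − st)/((q+1)Δ). -/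
/-- The `q`-distance matrix of the graph obtained from a graph `H` with
`m` vertices (with `q`-distance matrix `D̂` and cut vertex `w_m`, playing the
role of an `X`-vertex of the new block) by attaching a leaf block `K_{s,t}`:
the index set is `Fin m ⊕ (Fin s' ⊕ Fin t')` where `Fin s'` indexes the new
`X`-vertices other than the cut vertex and `Fin t'` the new `Y`-vertices. -/
def extDMat (F : Type*) [Field F] (q : F) {m s' t' : ℕ}
    (Dh : Matrix (Fin m) (Fin m) F) (wm : Fin m) :
    Matrix (Fin m ⊕ (Fin s' ⊕ Fin t')) (Fin m ⊕ (Fin s' ⊕ Fin t')) F :=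
  Matrix.of fun u v =>
    match u, v with
    | Sum.inl i, Sum.inl j => Dh i j
    | Sum.inl i, Sum.inr (Sum.inl _) => (q + 1) + q ^ 2 * Dh i wm
    | Sum.inr (Sum.inl _), Sum.inl i => (q + 1) + q ^ 2 * Dh i wm
    | Sum.inl i, Sum.inr (Sum.inr _) => 1 + q * Dh i wm
    | Sum.inr (Sum.inr _), Sum.inl i => 1 + q * Dh i wm
    | Sum.inr (Sum.inl a), Sum.inr (Sum.inl b) => if a = b then 0 else q + 1
    | Sum.inr (Sum.inl _), Sum.inr (Sum.inr _) => 1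
    | Sum.inr (Sum.inr _), Sum.inr (Sum.inl _) => 1
    | Sum.inr (Sum.inr c), Sum.inr (Sum.inr c') => if c = c' then 0 else q + 1

/-! On the old vertices `x` differs from `x̂` only at `w_m`, by `α - 1`, and on the new block it is
constant: `α` on the `X`-part, `β` on the `Y`-part. So each row of `D * x` is a row of `D̂ * x̂`
(for a new vertex, one of the weighted sums (ii), (iii), by symmetry of `D̂`) plus a linear
expression in `α` and `β`. Two identities finish: the coefficient of `D̂ i w_m` in that
expression vanishes, and `(s - 1)(q + 1)α + tβ = λ_{s,t}`; exchanging `s` and `t` exchanges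
`α` and `β` and fixes `λ_{s,t}`, which gives the rows of the `Y`-part. -/

open Matrix

section LeafBlockAlgebra

variable {F : Type*} [Field F] {q : F} (s t : F)

theorem leafWeights_cancel_cutVertex (hq : q + 1 ≠ 0) (hΔ : q ^ 2 * (s - 1) * (t - 1) - 1 ≠ 0) :
    (q * (t - 1) - 1) / ((q + 1) * (q ^ 2 * (s - 1) * (t - 1) - 1)) - 1
      + (s - 1) * q ^ 2 * ((q * (t - 1) - 1) / ((q + 1) * (q ^ 2 * (s - 1) * (t - 1) - 1)))
      + t * q * ((q * (s - 1) - 1) / ((q + 1) * (q ^ 2 * (s - 1) * (t - 1) - 1))) = 0 := by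
  have hden := mul_ne_zero hq hΔ
  have hα := div_mul_cancel₀ (q * (t - 1) - 1) hden
  have hβ := div_mul_cancel₀ (q * (s - 1) - 1) hden
  refine mul_right_cancel₀ hden ?_
  linear_combination (1 + (s - 1) * q ^ 2) * hα + t * q * hβ

theorem leafWeights_sum_eq (hq : q + 1 ≠ 0) (hΔ : q ^ 2 * (s - 1) * (t - 1) - 1 ≠ 0) :
    (s - 1) * (q + 1) * ((q * (t - 1) - 1) / ((q + 1) * (q ^ 2 * (s - 1) * (t - 1) - 1)))
      + t * ((q * (s - 1) - 1) / ((q + 1) * (q ^ 2 * (s - 1) * (t - 1) - 1)))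
      = ((q + 1) ^ 2 * (s - 1) * (t - 1) - s * t) /
          ((q + 1) * (q ^ 2 * (s - 1) * (t - 1) - 1)) := by
  have hden := mul_ne_zero hq hΔ
  have hα := div_mul_cancel₀ (q * (t - 1) - 1) hden
  have hβ := div_mul_cancel₀ (q * (s - 1) - 1) hden
  have hlam := div_mul_cancel₀ ((q + 1) ^ 2 * (s - 1) * (t - 1) - s * t) hden
  refine mul_right_cancel₀ hden ?_
  linear_combination (s - 1) * (q + 1) * hα + t * hβ - hlam

end LeafBlockAlgebra

theorem Fintype.sum_ite_eq_zero_else_s11 {ι M : Type*} [Fintype ι] [DecidableEq ι] [AddCommGroup M]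
    (g : ι → M) (a : ι) :
    ∑ b, (if a = b then 0 else g b) = ∑ b, g b - g a := by
  rw [← Finset.sum_erase_eq_sub (Finset.mem_univ a), Finset.sum_ite, Finset.sum_const_zero,
    zero_add]
  congr 1
  ext b
  simp [eq_comm]

section ExtDMat

variable {F : Type*} [Field F] (q : F) {m s' t' : ℕ} (Dh : Matrix (Fin m) (Fin m) F) (wm : Fin m)
variable (v : Fin m ⊕ (Fin s' ⊕ Fin t') → F)

theorem extDMat_mulVec_inl (i : Fin m) :
    (extDMat F q Dh wm *ᵥ v) (Sum.inl i) = (Dh *ᵥ (v ∘ Sum.inl)) i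
      + ((q + 1) + q ^ 2 * Dh i wm) * ∑ b, v (Sum.inr (Sum.inl b))
      + (1 + q * Dh i wm) * ∑ c, v (Sum.inr (Sum.inr c)) := by
  simp [mulVec, dotProduct, Fintype.sum_sum_type, extDMat, Finset.mul_sum, add_assoc]

theorem extDMat_mulVec_inr_inl (a : Fin s') :
    (extDMat F q Dh wm *ᵥ v) (Sum.inr (Sum.inl a))
      = (fun j => (q + 1) + q ^ 2 * Dh j wm) ⬝ᵥ (v ∘ Sum.inl)
        + (q + 1) * (∑ b, v (Sum.inr (Sum.inl b)) - v (Sum.inr (Sum.inl a)))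
        + ∑ c, v (Sum.inr (Sum.inr c)) := by
  simp [mulVec, dotProduct, Fintype.sum_sum_type, extDMat, Fintype.sum_ite_eq_zero_else_s11,
    Finset.mul_sum, mul_sub, add_assoc]

theorem extDMat_mulVec_inr_inr (c : Fin t') :
    (extDMat F q Dh wm *ᵥ v) (Sum.inr (Sum.inr c))
      = (fun j => 1 + q * Dh j wm) ⬝ᵥ (v ∘ Sum.inl)
        + ∑ b, v (Sum.inr (Sum.inl b))
        + (q + 1) * (∑ c', v (Sum.inr (Sum.inr c')) - v (Sum.inr (Sum.inr c))) := by
  simp [mulVec, dotProduct, Fintype.sum_sum_type, extDMat, Fintype.sum_ite_eq_zero_else_s11,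
    Finset.mul_sum, mul_sub, add_assoc]

end ExtDMat

theorem extXVec_comp_inl {F : Type*} [Field F] (q : F) (s t : ℕ) {m s' t' : ℕ}
    (xh : Fin m → F) (wm : Fin m) :
    extXVec F q s t xh wm (s' := s') (t' := t') ∘ Sum.inl = xh + (Pi.single wm
      ((q * ((t : F) - 1) - 1) / ((q + 1) * (q ^ 2 * ((s : F) - 1) * ((t : F) - 1) - 1)) - 1)
        : Fin m → F) := by
  ext i
  by_cases h : i = wm
  · subst h; simp [extXVec, add_sub_assoc]
  · simp [extXVec, h]

theorem extDMat_mulVec_extXVec_general (F : Type*) [Field F] (q : F)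
    (m s t : ℕ) (hs : 1 ≤ s)
    (hq : q + 1 ≠ 0)
    (hΔ : q ^ 2 * ((s : F) - 1) * ((t : F) - 1) - 1 ≠ 0)
    (Dh : Matrix (Fin m) (Fin m) F) (hsymm : Dh.IsSymm)
    (wm : Fin m) (hdiag : Dh wm wm = 0)
    (xh : Fin m → F) (lamH : F)
    (hDx : ∀ i, Dh.mulVec xh i = lamH)
    (hsum1 : ∑ j, (1 + q + (q ^ 2 - 1) * Dh wm j) * xh j = q + 1)
    (hsum2 : ∑ j, (1 + (q - 1) * Dh wm j) * xh j = 1) :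
    ∀ u : Fin m ⊕ (Fin (s - 1) ⊕ Fin t),
      (extDMat F q Dh wm (s' := s - 1) (t' := t)).mulVec
          (extXVec F q s t xh wm) u
        = lamH + ((q + 1) ^ 2 * ((s : F) - 1) * ((t : F) - 1) - (s : F) * (t : F)) /
            ((q + 1) * (q ^ 2 * ((s : F) - 1) * ((t : F) - 1) - 1)) := by
  have hcast : ((s - 1 : ℕ) : F) = (s : F) - 1 := by push_cast [Nat.cast_sub hs]; ring
  have hrow : ∀ c d : F, (fun j => c + d * Dh j wm) ⬝ᵥ xh
      = ∑ j, (c + (d - 1) * Dh wm j) * xh j + lamH := by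
    intro c d
    rw [← hDx wm, mulVec, dotProduct, dotProduct, ← Finset.sum_add_distrib]
    exact Finset.sum_congr rfl fun j _ => by rw [hsymm.apply]; ring
  have hX : (fun j => (q + 1) + q ^ 2 * Dh j wm) ⬝ᵥ xh = (q + 1) + lamH := by
    rw [hrow, add_comm q 1, hsum1]; ring
  have hY : (fun j => 1 + q * Dh j wm) ⬝ᵥ xh = 1 + lamH := by
    rw [hrow, hsum2]
  have hcut := leafWeights_cancel_cutVertex (s : F) t hq hΔ
  have hsum := leafWeights_sum_eq (s : F) t hq hΔ
  have hsum' := leafWeights_sum_eq (t : F) s hq (by rwa [mul_right_comm])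
  rintro (i | a | c)
  · rw [extDMat_mulVec_inl, extXVec_comp_inl, mulVec_add, Pi.add_apply, hDx, mulVec_single]
    simp only [extXVec, Finset.sum_const, Finset.card_univ, Fintype.card_fin, nsmul_eq_mul, hcast,
      Pi.smul_apply, col_apply, op_smul_eq_mul]
    linear_combination Dh i wm * hcut + hsum
  · rw [extDMat_mulVec_inr_inl, extXVec_comp_inl, dotProduct_add, hX, dotProduct_single]
    simp only [extXVec, Finset.sum_const, Finset.card_univ, Fintype.card_fin, nsmul_eq_mul, hcast,
      hdiag]
    linear_combination hsum
  · rw [extDMat_mulVec_inr_inr, extXVec_comp_inl, dotProduct_add, hY, dotProduct_single]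
    simp only [extXVec, Finset.sum_const, Finset.card_univ, Fintype.card_fin, nsmul_eq_mul, hcast,
      hdiag]
    linear_combination hsum'

theorem extDMat_mulVec_extXVec (F : Type*) [Field F] (q : F)
    (m s t : ℕ) (hm : 1 ≤ m) (hs : 1 ≤ s) (ht : 1 ≤ t)
    (hq0 : q ≠ 0) (hq : q + 1 ≠ 0)
    (hΔ : q ^ 2 * ((s : F) - 1) * ((t : F) - 1) - 1 ≠ 0)
    (Dh : Matrix (Fin m) (Fin m) F) (hsymm : Dh.IsSymm)
    (wm : Fin m) (hwm : (wm : ℕ) = m - 1) (hdiag : Dh wm wm = 0)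
    (xh : Fin m → F) (lamH : F)
    (hDx : ∀ i, Dh.mulVec xh i = lamH)
    (hsum1 : ∑ j, (1 + q + (q ^ 2 - 1) * Dh wm j) * xh j = q + 1)
    (hsum2 : ∑ j, (1 + (q - 1) * Dh wm j) * xh j = 1) :
    ∀ u : Fin m ⊕ (Fin (s - 1) ⊕ Fin t),
      (extDMat F q Dh wm (s' := s - 1) (t' := t)).mulVec
          (extXVec F q s t xh wm) u
        = lamH + ((q + 1) ^ 2 * ((s : F) - 1) * ((t : F) - 1) - (s : F) * (t : F)) /
            ((q + 1) * (q ^ 2 * ((s : F) - 1) * ((t : F) - 1) - 1)) :=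
  extDMat_mulVec_extXVec_general F q m s t hs hq hΔ Dh hsymm wm hdiag xh lamH hDx hsum1 hsum2
end

section
/- Let F be a field, q ∈ F, and m, s, t ≥ 1 natural numbers, with q + 1 ≠ 0 and Δ := q²(s−1)(t−1) − 1 ≠ 0 in F. Let D̂ be a symmetric m×m matrix over F with D̂(w_m, w_m) = 0 (w_m the last index of Fin m), let L̂ be an m×m matrix and x̂ : Fin m → F such that D̂·L̂ + I = 𝟙·x̂ᵀ and ∑_{u} L̂(u,v) = (1 − q)·x̂(v) for every v. Index I = Fin m ⊕ (Fin (s−1) ⊕ Fin t) and define the I×I matrix D by: D(inl i, inl j) = D̂(i,j); D(inl i, inr(inl b)) = D(inr(inl b), inl i) = (q+1) + q²·D̂(i, w_m); D(inl i, inr(inr c)) = D(inr(inr c), inl i) = 1 + q·D̂(i, w_m); D(inr(inl a), inr(inl b)) = q+1 if a ≠ b and 0 if a = b; D(inr(inl a), inr(inr c)) = D(inr(inr c), inr(inl a)) = 1; D(inr(inr c), inr(inr c')) = q+1 if c ≠ c' and 0 if c = c'. Define x : I → F by x(inl i) = x̂(i) for i ≠ w_m, x(inl w_m) = x̂(w_m)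 + (q(t−1)−1)/((q+1)Δ) − 1, x(inr (inl a)) = (q(t−1)−1)/((q+1)Δ), x(inr (inr c)) = (q(s−1)−1)/((q+1)Δ). Define the I×I matrix L by: L(inl i, inl j) = L̂(i,j) − (q²/(q+1))·((t−1)/Δ − 1) when i = j = w_m and L(inl i, inl j) = L̂(i,j) otherwise; L(inl w_m, inr(inl b)) = L(inr(inl b), inl w_m) = −q²(t−1)/((q+1)Δ), and L(inl i, inr(inl b)) = L(inr(inl b), inl i) = 0 for i ≠ w_m; L(inl w_m, inr(inr c)) = L(inr(inr c), inl w_m) = q/((q+1)Δ), and L(inl i, inr(inr c)) = L(inr(inr c), inl i) = 0 for i ≠ w_m; L(inr(inl a), inr(inl b)) = −q²(t−1)/((q+1)Δ) + (1/(q+1) if a = b else 0); L(inr(inl a), inr(inr c)) = L(inr(inr c), inr(inl a)) = q/((q+1)Δ); L(inr(inr c), inr(inr c')) = −q²(s−1)/((q+1)Δ) + (1/(q+1) if c = c' else 0). Then D·L + I = 𝟙·xᵀ, i.e. for all u, v ∈ I: ∑_{w} D(u,w)·L(w,v) + (1 if u = v else 0) = x(v). -/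
/-- The Laplacian-like matrix `ℒ` of the enlarged graph, written entrywise in
terms of the Laplacian-like matrix `L̂` of `H`.  Here `Δ = q²(s−1)(t−1) − 1`
with `s, t` cast into `F`. -/
def extLMat (F : Type*) [Field F] (q : F) (s t : ℕ) {m s' t' : ℕ}
    (Lh : Matrix (Fin m) (Fin m) F) (wm : Fin m) :
    Matrix (Fin m ⊕ (Fin s' ⊕ Fin t')) (Fin m ⊕ (Fin s' ⊕ Fin t')) F :=
  let Δ : F := q ^ 2 * ((s : F) - 1) * ((t : F) - 1) - 1
  Matrix.of fun u v =>
    match u, v with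
    | Sum.inl i, Sum.inl j =>
        if i = wm ∧ j = wm then
          Lh i j - (q ^ 2 / (q + 1)) * (((t : F) - 1) / Δ - 1)
        else Lh i j
    | Sum.inl i, Sum.inr (Sum.inl _) =>
        if i = wm then -q ^ 2 * ((t : F) - 1) / ((q + 1) * Δ) else 0
    | Sum.inr (Sum.inl _), Sum.inl i =>
        if i = wm then -q ^ 2 * ((t : F) - 1) / ((q + 1) * Δ) else 0
    | Sum.inl i, Sum.inr (Sum.inr _) =>
        if i = wm then q / ((q + 1) * Δ) else 0
    | Sum.inr (Sum.inr _), Sum.inl i =>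
        if i = wm then q / ((q + 1) * Δ) else 0
    | Sum.inr (Sum.inl a), Sum.inr (Sum.inl b) =>
        -q ^ 2 * ((t : F) - 1) / ((q + 1) * Δ) + (if a = b then 1 / (q + 1) else 0)
    | Sum.inr (Sum.inl _), Sum.inr (Sum.inr _) => q / ((q + 1) * Δ)
    | Sum.inr (Sum.inr _), Sum.inr (Sum.inl _) => q / ((q + 1) * Δ)
    | Sum.inr (Sum.inr c), Sum.inr (Sum.inr c') =>
        -q ^ 2 * ((s : F) - 1) / ((q + 1) * Δ) + (if c = c' then 1 / (q + 1) else 0)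

/-!
The identity is checked entrywise. Restricted to the vertices of `H`, a row of `D` indexed by a
new vertex is affine in row `w_m` of `D̂` (by symmetry of `D̂`), so its product with a column of `L̂`
is evaluated by `D̂ L̂ + I = 𝟙 x̂ᵀ` together with the column sums of `L̂`; a column of `L` indexed by
a new vertex is supported on `w_m` inside `H`. All remaining sums run over the new block and involve
only constants and Kronecker deltas, which leaves a rational identity in `q, s, t` with
denominators `q + 1` and `Δ`.
-/

theorem Matrix.sum_mul_eq_sub_ite_of_mul_add_one_eq {n R : Type*} [Fintype n] [DecidableEq n]
    [Ring R] {A B : Matrix n n R} {x : n → R} (h : A * B + 1 = Matrix.of fun _ v => x v)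
    (i j : n) : ∑ k, A i k * B k j = x j - if i = j then 1 else 0 := by
  have hij := congrFun₂ h i j
  simp only [Matrix.add_apply, Matrix.mul_apply, Matrix.one_apply, Matrix.of_apply] at hij
  rw [← hij, add_sub_cancel_right]

theorem Matrix.sum_add_mul_mul_of_mul_add_one_eq {n R : Type*} [Fintype n] [DecidableEq n]
    [CommRing R] {A B : Matrix n n R} {x : n → R} {c : R} (hA : A.IsSymm)
    (h : A * B + 1 = Matrix.of fun _ v => x v) (hB : ∀ v, ∑ u, B u v = c * x v)
    (a b : R) (i j : n) :
    ∑ k, (a + b * A k i) * B k j = a * (c * x j) + b * (x j - if j = i then 1 else 0) := by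
  simp only [add_mul, mul_assoc, Finset.sum_add_distrib, ← Finset.mul_sum, hB, hA.apply,
    Matrix.sum_mul_eq_sub_ite_of_mul_add_one_eq h, eq_comm (a := i)]

theorem Fintype.sum_ite_eq_zero {ι M : Type*} [Fintype ι] [DecidableEq ι] [AddCommGroup M]
    (a : ι) (f : ι → M) : ∑ x, (if a = x then 0 else f x) = ∑ x, f x - f a := by
  rw [eq_sub_iff_add_eq, ← Fintype.sum_ite_eq a f, ← Finset.sum_add_distrib]
  exact Fintype.sum_congr _ _ fun x => by split_ifs <;> simp

section

variable {F : Type*} [Field F] {q : F} {s t m s' t' : ℕ} {Dh Lh : Matrix (Fin m) (Fin m) F}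
  {wm : Fin m} {xh : Fin m → F}

theorem sum_mul_extLMat_inl_inr (f : Fin m → F) (w : Fin s' ⊕ Fin t') :
    ∑ k, f k * extLMat F q s t Lh wm (Sum.inl k) (Sum.inr w) =
      f wm * extLMat F q s t Lh wm (Sum.inl wm) (Sum.inr w) := by
  refine Fintype.sum_eq_single wm fun k hk => ?_
  rcases w with b | c <;> simp [extLMat, hk]

theorem sum_mul_extLMat_inl_inl (f : Fin m → F) (j : Fin m) :
    ∑ k, f k * extLMat F q s t Lh wm (s' := s') (t' := t') (Sum.inl k) (Sum.inl j) =
      ∑ k, f k * Lh k j - if j = wm then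
        f wm * (q ^ 2 / (q + 1) * (((t : F) - 1) / (q ^ 2 * ((s : F) - 1) * ((t : F) - 1) - 1) - 1))
        else 0 := by
  split_ifs with hj
  · subst hj
    rw [← Fintype.sum_ite_eq' j fun k => f k * _, ← Finset.sum_sub_distrib]
    refine Fintype.sum_congr _ _ fun k => ?_
    by_cases hk : k = j <;> simp [extLMat, hk]
    ring
  · simp [extLMat, hj]

/- `Δ` is generalized before `field_simp`, which would otherwise normalize it and then fail to
recognize it as nonzero. -/

theorem extDMat_mul_extLMat_add_one_inl (hs : 1 ≤ s) (hq : q + 1 ≠ 0)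
    (hΔ : q ^ 2 * ((s : F) - 1) * ((t : F) - 1) - 1 ≠ 0)
    (hDL : Dh * Lh + 1 = Matrix.of fun _ v => xh v) (i : Fin m)
    (v : Fin m ⊕ (Fin (s - 1) ⊕ Fin t)) :
    ∑ w, extDMat F q Dh wm (Sum.inl i) w * extLMat F q s t Lh wm w v
        + (if Sum.inl i = v then 1 else 0) = extXVec F q s t xh wm v := by
  rcases v with j | b | c <;>
    simp only [Fintype.sum_sum_type, sum_mul_extLMat_inl_inl, sum_mul_extLMat_inl_inr] <;>
    simp only [extDMat, Matrix.sum_mul_eq_sub_ite_of_mul_add_one_eq hDL, extLMat, extXVec,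
      Matrix.of_apply, mul_add, mul_ite, mul_zero, Finset.sum_add_distrib, Finset.sum_ite_eq',
      Finset.mem_univ, if_true, Finset.sum_const, Finset.card_univ, Fintype.card_fin, nsmul_eq_mul,
      Nat.cast_pred hs, Sum.inl.injEq, reduceCtorEq, if_false, add_zero] <;>
    (try split_ifs) <;> subst_vars <;>
    generalize hD : q ^ 2 * ((s : F) - 1) * ((t : F) - 1) - 1 = Δ at hΔ ⊢ <;>
    field_simp <;> subst hD <;> ring

theorem extDMat_mul_extLMat_add_one_inr (hs : 1 ≤ s) (hq : q + 1 ≠ 0)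
    (hΔ : q ^ 2 * ((s : F) - 1) * ((t : F) - 1) - 1 ≠ 0) (hsymm : Dh.IsSymm)
    (hdiag : Dh wm wm = 0) (hDL : Dh * Lh + 1 = Matrix.of fun _ v => xh v)
    (hcol : ∀ v, ∑ u, Lh u v = (1 - q) * xh v) (u : Fin (s - 1) ⊕ Fin t)
    (v : Fin m ⊕ (Fin (s - 1) ⊕ Fin t)) :
    ∑ w, extDMat F q Dh wm (Sum.inr u) w * extLMat F q s t Lh wm w v
        + (if Sum.inr u = v then 1 else 0) = extXVec F q s t xh wm v := by
  rcases u with a | c <;> rcases v with j | b | c' <;>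
    simp only [Fintype.sum_sum_type, sum_mul_extLMat_inl_inl, sum_mul_extLMat_inl_inr] <;>
    simp only [extDMat, Matrix.sum_add_mul_mul_of_mul_add_one_eq hsymm hDL hcol, extLMat,
      extXVec, Matrix.of_apply, hdiag, ite_mul, zero_mul, Fintype.sum_ite_eq_zero, mul_add,
      mul_ite, mul_zero, Finset.sum_add_distrib, Finset.sum_ite_eq', Finset.mem_univ, if_true,
      Finset.sum_const, Finset.card_univ, Fintype.card_fin, nsmul_eq_mul, Nat.cast_pred hs,
      Sum.inl.injEq, Sum.inr.injEq, reduceCtorEq, if_false, add_zero, Finset.sum_ite_irrel] <;>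
    (try split_ifs) <;> subst_vars <;>
    generalize hD : q ^ 2 * ((s : F) - 1) * ((t : F) - 1) - 1 = Δ at hΔ ⊢ <;>
    field_simp <;> subst hD <;> ring

end

theorem extDMat_mul_extLMat_add_one_general (F : Type*) [Field F] (q : F)
    (m s t : ℕ) (hs : 1 ≤ s)
    (hq : q + 1 ≠ 0)
    (hΔ : q ^ 2 * ((s : F) - 1) * ((t : F) - 1) - 1 ≠ 0)
    (Dh : Matrix (Fin m) (Fin m) F) (hsymm : Dh.IsSymm)
    (wm : Fin m) (hdiag : Dh wm wm = 0)
    (Lh : Matrix (Fin m) (Fin m) F) (xh : Fin m → F)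
    (hDL : Dh * Lh + 1 = Matrix.of fun _ v => xh v)
    (hcol : ∀ v, ∑ u, Lh u v = (1 - q) * xh v) :
    ∀ u v : Fin m ⊕ (Fin (s - 1) ⊕ Fin t),
      (∑ w, extDMat F q Dh wm (s' := s - 1) (t' := t) u w *
          extLMat F q s t Lh wm (s' := s - 1) (t' := t) w v)
        + (if u = v then 1 else 0) = extXVec F q s t xh wm v := by
  rintro (i | u) v
  · exact extDMat_mul_extLMat_add_one_inl hs hq hΔ hDL i v
  · exact extDMat_mul_extLMat_add_one_inr hs hq hΔ hsymm hdiag hDL hcol u v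

theorem extDMat_mul_extLMat_add_one (F : Type*) [Field F] (q : F)
    (m s t : ℕ) (hm : 1 ≤ m) (hs : 1 ≤ s) (ht : 1 ≤ t)
    (hq : q + 1 ≠ 0)
    (hΔ : q ^ 2 * ((s : F) - 1) * ((t : F) - 1) - 1 ≠ 0)
    (Dh : Matrix (Fin m) (Fin m) F) (hsymm : Dh.IsSymm)
    (wm : Fin m) (hwm : (wm : ℕ) = m - 1) (hdiag : Dh wm wm = 0)
    (Lh : Matrix (Fin m) (Fin m) F) (xh : Fin m → F)
    (hDL : Dh * Lh + 1 = Matrix.of fun _ v => xh v)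
    (hcol : ∀ v, ∑ u, Lh u v = (1 - q) * xh v) :
    ∀ u v : Fin m ⊕ (Fin (s - 1) ⊕ Fin t),
      (∑ w, extDMat F q Dh wm (s' := s - 1) (t' := t) u w *
          extLMat F q s t Lh wm (s' := s - 1) (t' := t) w v)
        + (if u = v then 1 else 0) = extXVec F q s t xh wm v :=
  extDMat_mul_extLMat_add_one_general F q m s t hs hq hΔ Dh hsymm wm hdiag Lh xh hDL hcol
end
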